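/- Let n = 2^a·q with q odd and m an integer, and let m' = m - n/2 (n even). If a = 1, or a = 2 and m is even, or a > 2 and m is odd, then s₁(m,n) ≢ s₁(m',n) (mod 1), where s₁(m,n) is the class of (4m(m+n)+n(n-1))/(8n) in ℚ/ℤ. -/

import Mathlib

/-- The invariant `s₁(m,n) = (4m(m+n) + n(n-1))/(8n) ∈ ℚ/ℤ`. -/
noncomputable def s₁ (m n : ℤ) : ℚ :=
  (4 * m * (m + n) + n * (n - 1)) / (8 * n)

/-! With `n = 2k`, the difference `s₁(m,n) - s₁(m - k,n)` is exactly `(2m + k)/4`, so it is an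
integer iff `4 ∣ 2m + k`. Writing `k = 2^b q` with `q` odd, `2m + k` is odd when `b = 0`, is twice
the odd number `m + q` when `b = 1` and `m` is even, and is `≡ 2m ≡ 2 (mod 4)` when `b ≥ 2` and `m`
is odd. -/

lemma s₁_sub_s₁_sub_half (m k : ℤ) (hk : k ≠ 0) :
    s₁ m (2 * k) - s₁ (m - k) (2 * k) = ((2 * m + k : ℤ) : ℚ) / 4 := by
  have hk' : (k : ℚ) ≠ 0 := Int.cast_ne_zero.mpr hk
  unfold s₁
  push_cast
  field_simp
  ring

lemma Int.four_dvd_of_cast_div_four_eq {x z : ℤ} (h : (x : ℚ) / 4 = z) : 4 ∣ x :=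
  ⟨z, by exact_mod_cast (div_eq_iff (by norm_num : (4 : ℚ) ≠ 0)).mp h |>.trans (mul_comm _ _)⟩

lemma not_four_dvd_two_mul_add_two_pow_mul {b : ℕ} {q m : ℤ} (hq : Odd q)
    (h : b = 0 ∨ (b = 1 ∧ Even m) ∨ (1 < b ∧ Odd m)) : ¬ 4 ∣ 2 * m + 2 ^ b * q := by
  obtain ⟨c, rfl⟩ := hq
  rcases h with rfl | ⟨rfl, ⟨d, rfl⟩⟩ | ⟨hb, ⟨d, rfl⟩⟩
  · omega
  · omega
  · obtain ⟨e, rfl⟩ : ∃ e, b = e + 2 := ⟨b - 2, by omega⟩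
    rw [show (2 : ℤ) ^ (e + 2) * (2 * c + 1) = 4 * (2 ^ e * (2 * c + 1)) by ring]
    omega

theorem s1_distinguishes_general (a : ℕ) (q m : ℤ) (hq : Odd q)
    (ha : a = 1 ∨ (a = 2 ∧ Even m) ∨ (2 < a ∧ Odd m)) :
    ¬ ∃ z : ℤ, s₁ m (2 ^ a * q) - s₁ (m - (2 ^ a * q) / 2) (2 ^ a * q) = z := by
  obtain ⟨b, rfl⟩ : ∃ b, a = b + 1 := ⟨a - 1, by omega⟩
  have hk : (2 : ℤ) ^ b * q ≠ 0 := mul_ne_zero (by positivity) (by rintro rfl; simp at hq)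
  have hn : (2 : ℤ) ^ (b + 1) * q = 2 * (2 ^ b * q) := by ring
  rintro ⟨z, hz⟩
  rw [hn, Int.mul_ediv_cancel_left _ two_ne_zero, s₁_sub_s₁_sub_half _ _ hk] at hz
  have hb : b = 0 ∨ (b = 1 ∧ Even m) ∨ (1 < b ∧ Odd m) :=
    ha.imp (by omega) (Or.imp (And.imp_left (by omega)) (And.imp_left (by omega)))
  exact not_four_dvd_two_mul_add_two_pow_mul hq hb (Int.four_dvd_of_cast_div_four_eq hz)

/-- For `n = 2^a·q` with `q` odd and `m' = m - n/2`: if `a = 1`, or `a = 2` and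
`m` even, or `a > 2` and `m` odd, then `s₁(m,n) ≢ s₁(m',n) (mod 1)`. -/
theorem s1_distinguishes (a : ℕ) (q m : ℤ) (hq : Odd q) (hq0 : 0 < q)
    (ha : a = 1 ∨ (a = 2 ∧ Even m) ∨ (2 < a ∧ Odd m)) :
    ¬ ∃ z : ℤ, s₁ m (2 ^ a * q) - s₁ (m - (2 ^ a * q) / 2) (2 ^ a * q) = z :=
  s1_distinguishes_general a q m hq ha
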